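/- Let t ≥ 11 be a real number and let G be a t-tough (2P2 ∪ P1)-free graph on n vertices with minimum degree δ(G) ≤ n/(t+1) − 1. Suppose every edge uv of G satisfies |N_G(u) ∪ N_G(v)| > 5n/12. Let S = {v ∈ V(G) : d_G(v) < 5n/24} and S1 = {x ∈ S : d_G(x) < n/(t+1)}. Let M be a K_{1,2}-matching in G whose centers are precisely the vertices of S1, let G2 = G − S, let L be the set of pairs formed by the two leaves of each star of M, and let G2* be the graph obtained from G2 by adding each pair in L as an edge (if not already present). Then κ(G2*) ≥ |L| + α(G2*). -/

import Mathlib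

open SimpleGraph

variable {V : Type*}

/-- The number of connected components of `G - S`. -/
noncomputable def SimpleGraph.compCount (G : SimpleGraph V) (S : Set V) : ℕ :=
  Nat.card (G.induce Sᶜ).ConnectedComponent

/-- `S` is a cutset of `G`: `G - S` has at least two connected components. -/
def SimpleGraph.IsCutset (G : SimpleGraph V) (S : Set V) : Prop :=
  2 ≤ G.compCount S

/-- `G` is `t`-tough. -/
def SimpleGraph.Tough (t : ℝ) (G : SimpleGraph V) : Prop :=
  ∀ S : Set V, G.IsCutset S → t * G.compCount S ≤ S.ncard

/-- `G` contains no induced subgraph isomorphic to `H`. -/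
def SimpleGraph.IndFree {W : Type*} (G : SimpleGraph V) (H : SimpleGraph W) : Prop :=
  ¬ ∃ f : W ↪ V, ∀ a b : W, G.Adj (f a) (f b) ↔ H.Adj a b

/-- The 5-vertex graph `2P2 ∪ P1`: two disjoint edges and an isolated vertex. -/
def twoP2P1 : SimpleGraph (Fin 5) :=
  SimpleGraph.fromRel (fun i j => (i = 0 ∧ j = 1) ∨ (i = 2 ∧ j = 3))

/-- The 3-vertex graph `P2 ∪ P1`: an edge and an isolated vertex. -/
def P2P1 : SimpleGraph (Fin 3) :=
  SimpleGraph.fromRel (fun i j => i = 0 ∧ j = 1)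

/-- The path on four vertices `P4`. -/
def P4 : SimpleGraph (Fin 4) :=
  SimpleGraph.fromRel (fun i j => (i = 0 ∧ j = 1) ∨ (i = 1 ∧ j = 2) ∨ (i = 2 ∧ j = 3))

/-- Degree of a vertex, as the cardinality of its neighbor set. -/
noncomputable def SimpleGraph.deg (G : SimpleGraph V) (v : V) : ℕ :=
  (G.neighborSet v).ncard

/-- Minimum degree. -/
noncomputable def SimpleGraph.minDeg (G : SimpleGraph V) : ℕ :=
  sInf (Set.range G.deg)

/-- An independent set of vertices. -/
def SimpleGraph.IsIndepSet' (G : SimpleGraph V) (s : Set V) : Prop :=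
  s.Pairwise (fun u v => ¬ G.Adj u v)

/-- The independence number. -/
noncomputable def SimpleGraph.indepNum' (G : SimpleGraph V) : ℕ :=
  sSup {n : ℕ | ∃ s : Set V, G.IsIndepSet' s ∧ s.ncard = n}

/-- `G` is a complete graph. -/
def SimpleGraph.IsCompleteGraph (G : SimpleGraph V) : Prop :=
  ∀ u v : V, u ≠ v → G.Adj u v

open scoped Classical in
/-- Vertex connectivity: minimum size of a cutset for a noncomplete graph,
and `|V| - 1` for a complete graph. -/
noncomputable def SimpleGraph.kappa (G : SimpleGraph V) : ℕ :=
  if G.IsCompleteGraph then Nat.card V - 1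
  else sInf {n : ℕ | ∃ S : Set V, G.IsCutset S ∧ S.ncard = n}

open scoped Classical in
/-- The scattering number: `max {c(G-S) - |S| : S a cutset}` for a noncomplete graph,
and `⊤` for a complete graph. -/
noncomputable def SimpleGraph.scatter (G : SimpleGraph V) : WithTop ℤ :=
  if G.IsCompleteGraph then ⊤
  else ((sSup {z : ℤ | ∃ S : Set V, G.IsCutset S ∧
      z = (G.compCount S : ℤ) - (S.ncard : ℤ)} : ℤ) : WithTop ℤ)

/-- A `W`-matched path-cover of the vertex set `A`: a union of vertex-disjoint paths of `G`
covering `A`, each of whose two endvertices belong to `W`. -/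
structure SimpleGraph.PathCover (G : SimpleGraph V) (A : Set V) (W : Set V) where
  num : ℕ
  left : Fin num → V
  right : Fin num → V
  walk : ∀ i, G.Walk (left i) (right i)
  isPath : ∀ i, (walk i).IsPath
  disj : ∀ i j, i ≠ j → ∀ v, v ∈ (walk i).support → v ∉ (walk j).support
  cover : A ⊆ {v | ∃ i, v ∈ (walk i).support}
  matched : ∀ i, left i ∈ W ∧ right i ∈ W

/-!
Put `B = n/(t+1)`. Toughness bounds every independent set of `G` by `B`; this applies to `S`
(two adjacent vertices of degree `< 5n/24` would violate the edge condition), to `S1 ⊆ S`, and to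
every independent set of `G2*`, which is independent in `G`. Moreover `|L| ≤ |S1|`. A minimum
degree vertex `v` has `d(v) < B`, so `v ∈ S1`.

Suppose a cutset `X` of `G2*` had fewer than `|S1| + B ≤ 2B` vertices. Then `G - (S ∪ X)` has two
components. One consisting of a single vertex `y` is impossible: a neighbour `s ∈ S1` of `y` would
give `|N(y) ∪ N(s)| < |S| + |X| + B ≤ 4B`, and otherwise `d(y) ≤ |S \ S1| + |X| < 2B < 5n/24`.
One whose vertices outside `N(v)` are independent has fewer than `2B` vertices, so the edge
condition fails at any of its edges. Hence each of the two components has an edge outside `N(v)`,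
and these two edges together with `v` induce `2P2 ∪ P1`.
-/

namespace SimpleGraph

variable {G : SimpleGraph V}

lemma card_connectedComponent_of_forall_not_adj {W : Type*} (H : SimpleGraph W)
    (h : ∀ a b, ¬ H.Adj a b) : Nat.card H.ConnectedComponent = Nat.card W := by
  refine (Nat.card_eq_of_bijective H.connectedComponentMk
    ⟨fun a b hab => ?_, fun c => c.exists_rep⟩).symm
  obtain ⟨p⟩ := ConnectedComponent.exact hab
  cases p with
  | nil => rfl
  | cons ha _ => exact absurd ha (h _ _)

lemma IsIndepSet'.compCount_compl {I : Set V} (hI : G.IsIndepSet' I) :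
    G.compCount Iᶜ = I.ncard := by
  rw [compCount, compl_compl, card_connectedComponent_of_forall_not_adj, Nat.card_coe_set_eq]
  exact fun a b hab => hI a.2 b.2 (Subtype.coe_ne_coe.mpr hab.ne) hab

lemma Tough.ncard_le [Fintype V] {t : ℝ} (hG : G.Tough t)
    (hB : 1 ≤ (Fintype.card V : ℝ) / (t + 1)) {I : Set V} (hI : G.IsIndepSet' I) :
    (I.ncard : ℝ) ≤ Fintype.card V / (t + 1) := by
  rcases le_or_gt I.ncard 1 with h | h
  · exact le_trans (by exact_mod_cast h) hB
  have ht : 0 < t + 1 := by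
    by_contra! ht
    linarith [div_nonpos_of_nonneg_of_nonpos (Nat.cast_nonneg (Fintype.card V)) ht]
  have hcut := hG Iᶜ (by rw [IsCutset, hI.compCount_compl]; omega)
  rw [hI.compCount_compl] at hcut
  have hsum : (I.ncard : ℝ) + Iᶜ.ncard = Fintype.card V := by
    exact_mod_cast (Set.ncard_add_ncard_compl I).trans Nat.card_eq_fintype_card
  rw [le_div_iff₀ ht]
  linarith

lemma IsIndepSet'.image_val {s : Set V} {H : SimpleGraph s} (hH : G.induce s ≤ H) {I : Set s}
    (hI : H.IsIndepSet' I) : G.IsIndepSet' (Subtype.val '' I) := by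
  rintro _ ⟨a, ha, rfl⟩ _ ⟨b, hb, rfl⟩ hne hab
  exact hI ha hb (fun h => hne (congrArg _ h)) (hH hab)

lemma exists_isIndepSet'_ncard_eq_indepNum' [Finite V] (G : SimpleGraph V) :
    ∃ s, G.IsIndepSet' s ∧ s.ncard = G.indepNum' :=
  Nat.sSup_mem (s := {n | ∃ s : Set V, G.IsIndepSet' s ∧ s.ncard = n})
    ⟨0, ∅, Set.pairwise_empty _, Set.ncard_empty _⟩
    ⟨Nat.card V, by rintro _ ⟨s, -, rfl⟩; exact Set.ncard_le_card s⟩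

lemma indepNum'_le_of_induce_le [Finite V] {s : Set V} {H : SimpleGraph s}
    (hH : G.induce s ≤ H) {B : ℝ} (hind : ∀ I, G.IsIndepSet' I → (I.ncard : ℝ) ≤ B) :
    (H.indepNum' : ℝ) ≤ B := by
  obtain ⟨I, hI, hcard⟩ := H.exists_isIndepSet'_ncard_eq_indepNum'
  rw [← hcard, ← Set.ncard_image_of_injective I Subtype.val_injective]
  exact hind _ (hI.image_val hH)

lemma IsCompleteGraph.indepNum'_le_one [Finite V] (hG : G.IsCompleteGraph) :
    G.indepNum' ≤ 1 := by
  obtain ⟨s, hs, hcard⟩ := G.exists_isIndepSet'_ncard_eq_indepNum'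
  rw [← hcard, Set.ncard_le_one]
  intro a ha b hb
  by_contra h
  exact hs ha hb h (hG a b h)

lemma le_kappa_of_forall_isCutset {m : ℕ} (hcut : ∀ X, G.IsCutset X → m ≤ X.ncard)
    (hcomplete : G.IsCompleteGraph → m + 1 ≤ Nat.card V) : m ≤ G.kappa := by
  unfold kappa
  split_ifs with hG
  · have := hcomplete hG
    omega
  obtain ⟨u, w, hne, hadj⟩ : ∃ u w, u ≠ w ∧ ¬ G.Adj u w := by
    simpa [IsCompleteGraph] using hG
  have hpair : G.IsIndepSet' {u, w} := Set.pairwise_pair.mpr fun _ => ⟨hadj, fun h => hadj h.symm⟩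
  refine le_csInf ⟨_, {u, w}ᶜ, ?_, rfl⟩ (by rintro _ ⟨X, hX, rfl⟩; exact hcut X hX)
  rw [IsCutset, hpair.compCount_compl, Set.ncard_pair hne]

lemma exists_deg_eq_minDeg [Nonempty V] (G : SimpleGraph V) : ∃ v, G.deg v = G.minDeg :=
  Nat.sInf_mem (Set.range_nonempty G.deg)

lemma isIndepSet'_setOf_deg_lt {d : ℝ}
    (hedge : ∀ u w, G.Adj u w → 2 * d < ((G.neighborSet u ∪ G.neighborSet w).ncard : ℝ)) :
    G.IsIndepSet' {w | (G.deg w : ℝ) < d} := by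
  intro u (hu : (G.deg u : ℝ) < d) w (hw : (G.deg w : ℝ) < d) _ huw
  have hunion : (G.neighborSet u ∪ G.neighborSet w).ncard ≤ G.deg u + G.deg w :=
    Set.ncard_union_le _ _
  have : ((G.neighborSet u ∪ G.neighborSet w).ncard : ℝ) ≤ G.deg u + G.deg w := by
    exact_mod_cast hunion
  linarith [hedge u w huw]

lemma _root_.Set.exists_sym2_eq_of_ncard_eq_two {α : Type*} {s : Set α} (hs : s.ncard = 2) :
    ∃ e : Sym2 α, ∀ a ∈ s, ∀ b ∈ s, a ≠ b → s(a, b) = e := by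
  obtain ⟨p, q, -, rfl⟩ := Set.ncard_eq_two.mp hs
  refine ⟨s(p, q), ?_⟩
  rintro a (rfl | rfl) b (rfl | rfl) hab
  exacts [absurd rfl hab, rfl, Sym2.eq_swap, absurd rfl hab]

lemma Subgraph.ncard_leafPairs_le [Finite V] {M : G.Subgraph} {C : Set V}
    (hM : ∀ x ∈ C, (M.neighborSet x).ncard = 2) :
    {e : Sym2 V | ∃ x ∈ C, ∃ a b : V, a ≠ b ∧ M.Adj x a ∧ M.Adj x b ∧ e = s(a, b)}.ncard
      ≤ C.ncard := by
  rcases C.eq_empty_or_nonempty with rfl | ⟨x₀, -⟩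
  · simp
  have : Nonempty (Sym2 V) := ⟨s(x₀, x₀)⟩
  choose! leafPair hleafPair using fun x hx => Set.exists_sym2_eq_of_ncard_eq_two (hM x hx)
  refine (Set.ncard_le_ncard ?_).trans (Set.ncard_image_le (f := leafPair))
  rintro _ ⟨x, hx, a, b, hab, ha, hb, rfl⟩
  exact ⟨x, hx, (hleafPair x hx a ha b hb hab).symm⟩

/-- `C` is a union of connected components of `G - T`. -/
def IsComponentUnion (G : SimpleGraph V) (T C : Set V) : Prop :=
  Disjoint C T ∧ ∀ x ∈ C, G.neighborSet x ⊆ C ∪ T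

lemma IsCutset.exists_isComponentUnion {T : Set V} (hT : G.IsCutset T) :
    ∃ C₁ C₂, C₁.Nonempty ∧ C₂.Nonempty ∧ Disjoint C₁ C₂ ∧
      G.IsComponentUnion T C₁ ∧ G.IsComponentUnion T C₂ := by
  have : Finite (G.induce Tᶜ).ConnectedComponent := Nat.finite_of_card_ne_zero (by
    unfold IsCutset compCount at hT; omega)
  obtain ⟨c₁, c₂, hc⟩ := (Finite.one_lt_card_iff_nontrivial.mp hT).exists_pair_ne
  have hunion (c : (G.induce Tᶜ).ConnectedComponent) :
      G.IsComponentUnion T (Subtype.val '' c.supp) := by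
    refine ⟨Set.disjoint_left.mpr ?_, ?_⟩
    · rintro _ ⟨x, -, rfl⟩
      exact x.2
    · rintro _ ⟨x, hx, rfl⟩ y hy
      by_cases hyT : y ∈ T
      · exact Or.inr hyT
      · exact Or.inl ⟨⟨y, hyT⟩, c.mem_supp_of_adj_mem_supp hx hy, rfl⟩
  refine ⟨_, _, c₁.nonempty_supp.image _, c₂.nonempty_supp.image _, ?_, hunion c₁, hunion c₂⟩
  exact (Set.disjoint_image_iff Subtype.val_injective).mpr
    (G.induce Tᶜ |>.pairwise_disjoint_supp_connectedComponent hc)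

lemma IsComponentUnion.image_val {s : Set V} {H : SimpleGraph s} (hH : G.induce s ≤ H)
    {X C : Set s} (hC : H.IsComponentUnion X C) :
    G.IsComponentUnion (sᶜ ∪ Subtype.val '' X) (Subtype.val '' C) := by
  refine ⟨Set.disjoint_union_right.mpr ⟨Set.disjoint_left.mpr ?_,
    (Set.disjoint_image_iff Subtype.val_injective).mpr hC.1⟩, ?_⟩
  · rintro _ ⟨x, -, rfl⟩
    exact fun h => h x.2
  · rintro _ ⟨x, hx, rfl⟩ y hy
    by_cases hys : y ∈ s
    · rcases hC.2 x hx (hH (show (G.induce s).Adj x ⟨y, hys⟩ from hy)) with h | h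
      · exact Or.inl ⟨_, h, rfl⟩
      · exact Or.inr (Or.inr ⟨_, h, rfl⟩)
    · exact Or.inr (Or.inl hys)

lemma IsComponentUnion.not_adj {T C₁ C₂ : Set V} (h₁ : G.IsComponentUnion T C₁)
    (h₂ : G.IsComponentUnion T C₂) (hC : Disjoint C₁ C₂) {x y : V} (hx : x ∈ C₁)
    (hy : y ∈ C₂) : ¬ G.Adj x y := by
  intro hxy
  rcases h₁.2 x hx hxy with h | h
  · exact hC.ne_of_mem h hy rfl
  · exact h₂.1.ne_of_mem hy h rfl

lemma IsComponentUnion.exists_neighborSet_subset_or_adj {T C : Set V}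
    (hC : G.IsComponentUnion T C) (hne : C.Nonempty) :
    (∃ y ∈ C, G.neighborSet y ⊆ T) ∨ ∃ a ∈ C, ∃ b ∈ C, G.Adj a b := by
  by_cases h : ∃ y ∈ C, G.neighborSet y ⊆ T
  · exact Or.inl h
  push Not at h
  obtain ⟨x, hx⟩ := hne
  obtain ⟨w, hw, hwT⟩ := Set.not_subset.mp (h x hx)
  exact Or.inr ⟨x, hx, w, (hC.2 x hx hw).resolve_right hwT, hw⟩

lemma not_indFree_twoP2P1 {a b d e z : V} (hab : G.Adj a b) (hde : G.Adj d e)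
    (hcross : ∀ x ∈ ({a, b} : Set V), ∀ y ∈ ({d, e} : Set V), x ≠ y ∧ ¬ G.Adj x y)
    (hz : ∀ x ∈ ({a, b, d, e} : Set V), z ≠ x ∧ ¬ G.Adj z x) : ¬ G.IndFree twoP2P1 := by
  simp only [Set.mem_insert_iff, Set.mem_singleton_iff, forall_eq_or_imp, forall_eq] at hcross hz
  obtain ⟨⟨⟨nad, had⟩, nae, hae⟩, ⟨nbd, hbd⟩, nbe, hbe⟩ := hcross
  obtain ⟨⟨nza, hza⟩, ⟨nzb, hzb⟩, ⟨nzd, hzd⟩, nze, hze⟩ := hz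
  have nab := hab.ne
  have nde := hde.ne
  have hinj : Function.Injective ![a, b, d, e, z] := by
    intro i j hij
    fin_cases i <;> fin_cases j <;> simp_all
  have hadj (i j : Fin 5) :
      G.Adj (![a, b, d, e, z] i) (![a, b, d, e, z] j) ↔ twoP2P1.Adj i j := by
    fin_cases i <;> fin_cases j <;> simp [twoP2P1, *] <;>
      first | exact hab.symm | exact hde.symm | exact fun h => absurd h.symm ‹_›
  exact fun hfree => hfree ⟨⟨_, hinj⟩, hadj⟩

lemma IsComponentUnion.not_indFree_twoP2P1 {T C₁ C₂ : Set V} (h₁ : G.IsComponentUnion T C₁)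
    (h₂ : G.IsComponentUnion T C₂) (hC : Disjoint C₁ C₂) {z a b d e : V} (hz : z ∈ T)
    (ha : a ∈ C₁ \ G.neighborSet z) (hb : b ∈ C₁ \ G.neighborSet z) (hab : G.Adj a b)
    (hd : d ∈ C₂ \ G.neighborSet z) (he : e ∈ C₂ \ G.neighborSet z) (hde : G.Adj d e) :
    ¬ G.IndFree twoP2P1 := by
  have hcross (x : V) (hx : x ∈ C₁) (y : V) (hy : y ∈ C₂) : x ≠ y ∧ ¬ G.Adj x y :=
    ⟨hC.ne_of_mem hx hy, h₁.not_adj h₂ hC hx hy⟩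
  have hz₁ (x : V) (hx : x ∈ C₁) : z ≠ x := fun h => h₁.1.ne_of_mem hx hz h.symm
  have hz₂ (x : V) (hx : x ∈ C₂) : z ≠ x := fun h => h₂.1.ne_of_mem hx hz h.symm
  refine SimpleGraph.not_indFree_twoP2P1 (z := z) hab hde ?_ ?_
  · rintro x (rfl | rfl) y (rfl | rfl)
    exacts [hcross _ ha.1 _ hd.1, hcross _ ha.1 _ he.1, hcross _ hb.1 _ hd.1,
      hcross _ hb.1 _ he.1]
  · rintro x (rfl | rfl | rfl | rfl)
    exacts [⟨hz₁ _ ha.1, ha.2⟩, ⟨hz₁ _ hb.1, hb.2⟩, ⟨hz₂ _ hd.1, hd.2⟩, ⟨hz₂ _ he.1, he.2⟩]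

section

variable [Finite V] {d B : ℝ}
  (hedge : ∀ u w, G.Adj u w → 2 * d < ((G.neighborSet u ∪ G.neighborSet w).ncard : ℝ))
  (hind : ∀ I, G.IsIndepSet' I → (I.ncard : ℝ) ≤ B)
include hedge

lemma deg_lt_of_neighborSet_subset {T S₁ : Set V} {y : V} (hS₁ : ∀ s ∈ S₁, (G.deg s : ℝ) < B)
    (hT : (T.ncard : ℝ) + B ≤ 2 * d) (hTS₁ : ((T \ S₁).ncard : ℝ) < d)
    (hy : G.neighborSet y ⊆ T) : (G.deg y : ℝ) < d := by
  by_cases h : ∃ s ∈ S₁, G.Adj y s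
  · obtain ⟨s, hs, hys⟩ := h
    have hunion : (G.neighborSet y ∪ G.neighborSet s).ncard ≤ T.ncard + G.deg s :=
      (Set.ncard_union_le _ _).trans (Nat.add_le_add_right (Set.ncard_le_ncard hy) _)
    have : ((G.neighborSet y ∪ G.neighborSet s).ncard : ℝ) ≤ T.ncard + G.deg s := by
      exact_mod_cast hunion
    linarith [hedge y s hys, hS₁ s hs]
  · push Not at h
    have : G.deg y ≤ (T \ S₁).ncard :=
      Set.ncard_le_ncard fun w hw => ⟨hy hw, fun hs => h w hs hw⟩
    calc (G.deg y : ℝ) ≤ (T \ S₁).ncard := by exact_mod_cast this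
      _ < d := hTS₁

include hind in
lemma IsComponentUnion.exists_adj_diff_neighborSet {T C : Set V} {a b v : V}
    (hC : G.IsComponentUnion T C) (ha : a ∈ C) (hb : b ∈ C) (hab : G.Adj a b)
    (hv : (G.deg v : ℝ) + B + T.ncard ≤ 2 * d) :
    ∃ x ∈ C \ G.neighborSet v, ∃ y ∈ C \ G.neighborSet v, G.Adj x y := by
  by_contra! h
  have hCcard : C.ncard ≤ (C \ G.neighborSet v).ncard + G.deg v :=
    Set.ncard_le_ncard_sdiff_add_ncard _ _
  have hunion : (G.neighborSet a ∪ G.neighborSet b).ncard ≤ C.ncard + T.ncard :=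
    (Set.ncard_le_ncard (Set.union_subset (hC.2 a ha) (hC.2 b hb))).trans
      (Set.ncard_union_le _ _)
  have hfar := hind _ fun x hx y hy _ => h x hx y hy
  have : ((G.neighborSet a ∪ G.neighborSet b).ncard : ℝ)
      ≤ (C \ G.neighborSet v).ncard + G.deg v + T.ncard := by
    exact_mod_cast hunion.trans (Nat.add_le_add_right hCcard _)
  linarith [hedge a b hab]

include hind in
lemma not_indFree_twoP2P1_of_isComponentUnion {T S₁ C₁ C₂ : Set V} {v : V}
    (hS₁ : ∀ s ∈ S₁, (G.deg s : ℝ) < B) (hdeg : ∀ w ∉ T, d ≤ G.deg w) (hvT : v ∈ T)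
    (hT : (T.ncard : ℝ) + B ≤ 2 * d) (hTS₁ : ((T \ S₁).ncard : ℝ) < d)
    (hv : (G.deg v : ℝ) + B + T.ncard ≤ 2 * d)
    (h₁ : G.IsComponentUnion T C₁) (h₂ : G.IsComponentUnion T C₂)
    (hne₁ : C₁.Nonempty) (hne₂ : C₂.Nonempty) (hC : Disjoint C₁ C₂) :
    ¬ G.IndFree twoP2P1 := by
  have hfar {C : Set V} (hC : G.IsComponentUnion T C) (hne : C.Nonempty) :
      ∃ x ∈ C \ G.neighborSet v, ∃ y ∈ C \ G.neighborSet v, G.Adj x y := by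
    rcases hC.exists_neighborSet_subset_or_adj hne with ⟨y, hy, hyT⟩ | ⟨a, ha, b, hb, hab⟩
    · exact absurd (deg_lt_of_neighborSet_subset hedge hS₁ hT hTS₁ hyT)
        (not_lt.mpr (hdeg y (hC.1.notMem_of_mem_left hy)))
    · exact hC.exists_adj_diff_neighborSet hedge hind ha hb hab hv
  obtain ⟨a, ha, b, hb, hab⟩ := hfar h₁ hne₁
  obtain ⟨a', ha', b', hb', hab'⟩ := hfar h₂ hne₂
  exact h₁.not_indFree_twoP2P1 h₂ hC hvT ha hb hab ha' hb' hab'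

include hind in
lemma add_le_ncard_of_isCutset {S S₁ : Set V} {v : V} {H : SimpleGraph ↥Sᶜ}
    (hfree : G.IndFree twoP2P1) (hH : G.induce Sᶜ ≤ H) (hSind : G.IsIndepSet' S)
    (hS : ∀ w ∉ S, d ≤ G.deg w) (hS₁S : S₁ ⊆ S) (hS₁ : ∀ s ∈ S₁, (G.deg s : ℝ) < B)
    (hvS : v ∈ S) (hv : (G.deg v : ℝ) + 1 ≤ B) (hBd : 5 * B ≤ 2 * d)
    {X : Set ↥Sᶜ} (hX : H.IsCutset X) : (S₁.ncard : ℝ) + B ≤ X.ncard := by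
  by_contra! hlt
  obtain ⟨C₁, C₂, hne₁, hne₂, hC, h₁, h₂⟩ := hX.exists_isComponentUnion
  have h₁' := h₁.image_val hH
  have h₂' := h₂.image_val hH
  rw [compl_compl] at h₁' h₂'
  have hXcard : (Subtype.val '' X).ncard = X.ncard :=
    Set.ncard_image_of_injective _ Subtype.val_injective
  have hT : ((S ∪ Subtype.val '' X).ncard : ℝ) ≤ S.ncard + X.ncard := by
    rw [← hXcard]
    exact_mod_cast Set.ncard_union_le _ _
  have hTS₁ : (((S ∪ Subtype.val '' X) \ S₁).ncard : ℝ) ≤ (S \ S₁).ncard + X.ncard := by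
    rw [Set.union_sdiff_distrib, ← hXcard]
    exact_mod_cast (Set.ncard_union_le _ _).trans
      (Nat.add_le_add_left (Set.ncard_le_ncard Set.sdiff_subset) _)
  have hSS₁ : ((S \ S₁).ncard : ℝ) + S₁.ncard = S.ncard := by
    exact_mod_cast Set.ncard_sdiff_add_ncard_of_subset hS₁S
  have hSB := hind S hSind
  have hS₁S' : (S₁.ncard : ℝ) ≤ S.ncard := by exact_mod_cast Set.ncard_le_ncard hS₁S
  refine not_indFree_twoP2P1_of_isComponentUnion (T := S ∪ Subtype.val '' X) hedge hind hS₁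
    (fun w hw => hS w fun h => hw (Or.inl h)) (Or.inl hvS) ?_ ?_ ?_ h₁' h₂'
    (hne₁.image _) (hne₂.image _) ((Set.disjoint_image_iff Subtype.val_injective).mpr hC) hfree
  all_goals linarith [Nat.cast_nonneg (α := ℝ) (G.deg v)]

include hind in
lemma add_indepNum'_le_kappa {S S₁ : Set V} {v : V} {H : SimpleGraph ↥Sᶜ} {m : ℕ}
    (hfree : G.IndFree twoP2P1) (hH : G.induce Sᶜ ≤ H) (hSind : G.IsIndepSet' S)
    (hS : ∀ w ∉ S, d ≤ G.deg w) (hS₁S : S₁ ⊆ S) (hS₁ : ∀ s ∈ S₁, (G.deg s : ℝ) < B)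
    (hvS : v ∈ S) (hv : (G.deg v : ℝ) + 1 ≤ B) (hBd : 5 * B ≤ 2 * d)
    (hBV : 2 * B + 2 ≤ Nat.card V) (hm : m ≤ S₁.ncard) :
    m + H.indepNum' ≤ H.kappa := by
  have hm' : (m : ℝ) ≤ S₁.ncard := by exact_mod_cast hm
  have hS₁S' : (S₁.ncard : ℝ) ≤ S.ncard := by exact_mod_cast Set.ncard_le_ncard hS₁S
  have hSB := hind S hSind
  apply le_kappa_of_forall_isCutset
  · intro X hX
    have hα := indepNum'_le_of_induce_le hH hind
    have hX' := add_le_ncard_of_isCutset hedge hind hfree hH hSind hS hS₁S hS₁ hvS hv hBd hX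
    exact_mod_cast (by push_cast; linarith : ((m + H.indepNum' : ℕ) : ℝ) ≤ X.ncard)
  · intro hcomplete
    have hα : (H.indepNum' : ℝ) ≤ 1 := by exact_mod_cast hcomplete.indepNum'_le_one
    have hsum : ((S.ncard + Nat.card ↥Sᶜ : ℕ) : ℝ) = Nat.card V := by
      rw [Nat.card_coe_set_eq, Set.ncard_add_ncard_compl]
    push_cast at hsum
    exact_mod_cast (by push_cast; linarith : ((m + H.indepNum' + 1 : ℕ) : ℝ) ≤ Nat.card ↥Sᶜ)

end

end SimpleGraph

theorem stmt_15_general {V : Type*} [Fintype V] (t : ℝ) (ht : 11 ≤ t) (G : SimpleGraph V)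
    (htough : G.Tough t) (hfree : G.IndFree twoP2P1)
    (hδ : (G.minDeg : ℝ) ≤ (Fintype.card V : ℝ) / (t + 1) - 1)
    (hedge : ∀ u v : V, G.Adj u v →
      5 * (Fintype.card V : ℝ) / 12 < ((G.neighborSet u ∪ G.neighborSet v).ncard : ℝ))
    (S : Set V) (hS : S = {w : V | (G.deg w : ℝ) < 5 * (Fintype.card V) / 24})
    (S1 : Set V) (hS1 : S1 = {x ∈ S | (G.deg x : ℝ) < (Fintype.card V : ℝ) / (t + 1)})
    (M : G.Subgraph)
    (hM2 : ∀ x ∈ S1, (M.neighborSet x).ncard = 2)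
    (L : Set (Sym2 V))
    (hL : L = {e : Sym2 V | ∃ x ∈ S1, ∃ a b : V,
      a ≠ b ∧ M.Adj x a ∧ M.Adj x b ∧ e = s(a, b)})
    (G2star : SimpleGraph ↥(Sᶜ))
    (hG2star : G2star = G.induce Sᶜ ⊔
      SimpleGraph.fromRel (fun a b : ↥(Sᶜ) => s((a : V), (b : V)) ∈ L)) :
    L.ncard + G2star.indepNum' ≤ G2star.kappa := by
  set n : ℝ := (Fintype.card V : ℝ)
  set B := n / (t + 1)
  have hB : 1 ≤ B := by linarith [Nat.cast_nonneg (α := ℝ) G.minDeg]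
  have h12B : 12 * B ≤ n := by
    have : (t + 1) * B = n := mul_div_cancel₀ _ (by linarith)
    nlinarith
  have : Nonempty V := Fintype.card_pos_iff.mp (Nat.cast_pos.mp (by linarith : (0 : ℝ) < n))
  obtain ⟨v, hv⟩ := G.exists_deg_eq_minDeg
  have hvB : (G.deg v : ℝ) + 1 ≤ B := by rw [hv]; linarith
  have hedge' (u w : V) (huw : G.Adj u w) :
      2 * (5 * n / 24) < ((G.neighborSet u ∪ G.neighborSet w).ncard : ℝ) := by
    linarith [hedge u w huw]
  refine add_indepNum'_le_kappa hedge' (fun I hI => htough.ncard_le hB hI) hfree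
    (hG2star ▸ le_sup_left) (hS ▸ isIndepSet'_setOf_deg_lt hedge')
    (fun w hw => not_lt.mp fun h => hw (hS ▸ h)) (hS1 ▸ Set.sep_subset _ _)
    (by rw [hS1]; exact fun s hs => hs.2) (v := v) ?_ hvB (by linarith) ?_
    (hL ▸ M.ncard_leafPairs_le hM2)
  · rw [hS]
    exact (by linarith : (G.deg v : ℝ) < 5 * n / 24)
  · rw [Nat.card_eq_fintype_card]
    linarith

/-- Case 2, Claim 5: if `t ≥ 11`, `G` is `t`-tough, `(2P2 ∪ P1)`-free, with
`δ(G) ≤ n/(t+1) - 1` and `|N(u) ∪ N(v)| > 5n/12` for every edge `uv`, `S` the set of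
vertices of degree less than `5n/24`, `S1 ⊆ S` those of degree less than `n/(t+1)`, `M` a
`K_{1,2}`-matching with centers precisely `S1`, `L` the set of leaf pairs of the stars of
`M`, and `G2*` obtained from `G2 = G - S` by adding the pairs of `L` as edges, then
`κ(G2*) ≥ |L| + α(G2*)`. -/
theorem stmt_15 {V : Type*} [Fintype V] (t : ℝ) (ht : 11 ≤ t) (G : SimpleGraph V)
    (htough : G.Tough t) (hfree : G.IndFree twoP2P1)
    (hδ : (G.minDeg : ℝ) ≤ (Fintype.card V : ℝ) / (t + 1) - 1)
    (hedge : ∀ u v : V, G.Adj u v →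
      5 * (Fintype.card V : ℝ) / 12 < ((G.neighborSet u ∪ G.neighborSet v).ncard : ℝ))
    (S : Set V) (hS : S = {w : V | (G.deg w : ℝ) < 5 * (Fintype.card V) / 24})
    (S1 : Set V) (hS1 : S1 = {x ∈ S | (G.deg x : ℝ) < (Fintype.card V : ℝ) / (t + 1)})
    (M : G.Subgraph) (hM1 : S1 ⊆ M.verts)
    (hM2 : ∀ x ∈ S1, (M.neighborSet x).ncard = 2)
    (hM3 : ∀ w ∈ M.verts \ S1, (M.neighborSet w).ncard = 1)
    (hM4 : ∀ a b : V, M.Adj a b → (a ∈ S1 ↔ b ∉ S1))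
    (L : Set (Sym2 V))
    (hL : L = {e : Sym2 V | ∃ x ∈ S1, ∃ a b : V,
      a ≠ b ∧ M.Adj x a ∧ M.Adj x b ∧ e = s(a, b)})
    (G2star : SimpleGraph ↥(Sᶜ))
    (hG2star : G2star = G.induce Sᶜ ⊔
      SimpleGraph.fromRel (fun a b : ↥(Sᶜ) => s((a : V), (b : V)) ∈ L)) :
    L.ncard + G2star.indepNum' ≤ G2star.kappa :=
  stmt_15_general t ht G htough hfree hδ hedge S hS S1 hS1 M hM2 L hL G2star hG2star
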